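/- arXiv:1911.01589 — 6 statements merged into one kernel-verified Lean document; each statement's English description precedes it below -/
import Mathlib

section
/- Let G be a group and a ∈ Z₂(G) of finite order. If the center Z(G) has only finitely many elements of each given finite order, then the commutator subgroup image {[h,a] : h ∈ G} is finite, and hence the centralizer C_G(a) has finite index in G. -/
/-!
The set in the statement is `{⁅x, a⁻¹⁆ : x ∈ G}`, and `a⁻¹` is again in `Z₂(G)` of finite order,
so it suffices to treat commutators `⁅x, g⁆` with `g ∈ Z₂(G)`, `g ^ n = 1`. Such a commutator is
central, hence commutes with `g`, and `x g x⁻¹ = ⁅x, g⁆ g` gives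
`1 = (x g x⁻¹) ^ n = ⁅x, g⁆ ^ n g ^ n = ⁅x, g⁆ ^ n`. So all these commutators lie in the finite set
of central elements of exponent `n`; the cosets of `C_G(g)` embed into them via `x ↦ ⁅x, g⁆`.
-/

open scoped commutatorElement

theorem commutatorElement_pow_eq_one_of_commute {G : Type*} [Group G] {x g : G} {n : ℕ}
    (hcomm : Commute ⁅x, g⁆ g) (hg : g ^ n = 1) : ⁅x, g⁆ ^ n = 1 := by
  have hconj : x * g * x⁻¹ = ⁅x, g⁆ * g := by group
  calc ⁅x, g⁆ ^ n = (⁅x, g⁆ * g) ^ n := by rw [hcomm.mul_pow, hg, mul_one]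
    _ = 1 := by rw [← hconj, conj_pow, hg]; group

namespace Subgroup

variable {G : Type*} [Group G]

theorem commutatorElement_mem_center_of_mem_upperCentralSeries_two {g : G}
    (hg : g ∈ upperCentralSeries G 2) (x : G) : ⁅x, g⁆ ∈ center G := by
  have hgx := mem_upperCentralSeries_succ_iff.mp hg x
  rw [upperCentralSeries_one] at hgx
  rw [← commutatorElement_inv]
  exact inv_mem hgx

theorem centralizer_singleton_inv (g : G) : centralizer {g⁻¹} = centralizer {g} := by
  ext x
  simp only [mem_centralizer_singleton_iff]
  exact ⟨fun h => (Commute.inv_right_iff.mp h).eq, fun h => (Commute.inv_right h).eq⟩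

theorem finiteIndex_centralizer_of_finite_range_commutatorElement {g : G}
    (hfin : (Set.range fun x : G => ⁅x, g⁆).Finite) : (centralizer {g}).FiniteIndex := by
  have : Finite (Set.range fun x : G => ⁅x, g⁆) := hfin
  let f : G ⧸ centralizer {g} → Set.range fun x : G => ⁅x, g⁆ :=
    Set.codRestrict (fun q => (quotientCentralizerEmbedding g q : G)) _ fun q =>
      QuotientGroup.induction_on q fun x =>
        ⟨x, (congrArg Subtype.val (quotientCentralizerEmbedding_apply g x)).symm⟩
  have hf : f.Injective := (Set.injective_codRestrict _).mpr
    (Subtype.val_injective.comp (quotientCentralizerEmbedding g).injective)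
  have : Finite (G ⧸ centralizer {g}) := Finite.of_injective f hf
  exact finiteIndex_of_finite_quotient

end Subgroup

/-- If `a ∈ Z₂(G)` has finite order and the center of `G` has only finitely many
elements of each given finite order, then `{[h,a] : h ∈ G}` is finite and the
centralizer `C_G(a)` has finite index in `G`. -/
theorem stmt_2 {G : Type*} [Group G] (a : G) (ha : a ∈ upperCentralSeries G 2)
    (hfin : IsOfFinOrder a)
    (hZ : ∀ n : ℕ, 0 < n → {z : G | z ∈ Subgroup.center G ∧ z ^ n = 1}.Finite) :
    (Set.range fun h : G => h⁻¹ * a⁻¹ * h * a).Finite ∧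
    (Subgroup.centralizer {a}).FiniteIndex := by
  obtain ⟨n, hn, han⟩ := isOfFinOrder_iff_pow_eq_one.mp hfin.inv
  have hcenter := Subgroup.commutatorElement_mem_center_of_mem_upperCentralSeries_two (inv_mem ha)
  have hrange : (Set.range fun h : G => h⁻¹ * a⁻¹ * h * a) = Set.range fun x : G => ⁅x, a⁻¹⁆ := by
    rw [← (Equiv.inv G).surjective.range_comp]
    simp [Function.comp_def, commutatorElement_def]
  have hfinite : (Set.range fun x : G => ⁅x, a⁻¹⁆).Finite := (hZ n hn).subset <| by
    rintro _ ⟨x, rfl⟩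
    exact ⟨hcenter x, commutatorElement_pow_eq_one_of_commute
      (Subgroup.mem_center_iff.mp (hcenter x) a⁻¹).symm han⟩
  rw [hrange, ← Subgroup.centralizer_singleton_inv]
  exact ⟨hfinite, Subgroup.finiteIndex_centralizer_of_finite_range_commutatorElement hfinite⟩
end

section
/- Let G be a group in which there is a uniform bound k on the lengths of strictly descending chains of centralizers of subsets. If G is locally nilpotent, then G is soluble of derived length at most k. -/
/-!
Nilpotent case, by induction on `k`: if `G` is not abelian, pick `z ∈ Z₂(G) \ Z(G)`. By the three
subgroups lemma `G'` centralizes `Z₂(G)`, so `G' ≤ C_G(z) < G`. A chain of centralizers of length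
`k - 1` in `C_G(z)` would extend, after adjoining `z` to its sets, to one of length `k` in `G`;
hence `C_G(z)^{(k-1)} = 1` and `G^{(k)} ≤ C_G(z)^{(k-1)} = 1`.

A locally nilpotent `G` is the directed union of its finitely generated subgroups, which are
nilpotent and inherit the chain bound, and the derived series commutes with directed unions.
-/

open Subgroup

section

variable {G : Type*} [Group G]

/-- A chain of centralizers with `n` strict inclusions. The sets `C i` are taken increasing, which
is no restriction: replacing `C i` by `C 0 ∪ ⋯ ∪ C i` leaves the centralizers of a chain
unchanged. -/
def HasCentralizerChain (G : Type*) [Group G] (n : ℕ) : Prop :=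
  ∃ C : Fin (n + 1) → Set G, Monotone C ∧ StrictAnti fun i => centralizer (C i)

theorem hasCentralizerChain_zero : HasCentralizerChain G 0 :=
  ⟨fun _ => ∅, monotone_const, Subsingleton.strictAnti (α := Fin 1) _⟩

theorem val_mem_centralizer_union_image_iff {H : Subgroup G} {T : Set G}
    (hHT : H ≤ centralizer T) {S : Set H} {x : H} :
    (x : G) ∈ centralizer (T ∪ Subtype.val '' S) ↔ x ∈ centralizer S := by
  simp only [mem_centralizer_iff, Set.mem_union, or_imp, forall_and, Set.forall_mem_image,
    Subtype.ext_iff, coe_mul]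
  exact ⟨And.right, And.intro (hHT x.2)⟩

/-- The lift of `C i` is `T ∪ C i`: as `H` centralizes `T`, its centralizer meets `H` in
`C_H(C i)`. -/
theorem HasCentralizerChain.exists_lift {H : Subgroup G} {T : Set G} (hHT : H ≤ centralizer T)
    {n : ℕ} (h : HasCentralizerChain H n) :
    ∃ C : Fin (n + 1) → Set G, Monotone C ∧ (StrictAnti fun i => centralizer (C i)) ∧ T ⊆ C 0 := by
  obtain ⟨C, hmono, hanti⟩ := h
  refine ⟨fun i => T ∪ Subtype.val '' C i,
    fun i j hij => Set.union_subset_union_right _ (Set.image_mono (hmono hij)),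
    fun i j hij => lt_of_le_of_ne (centralizer_le ?_) fun heq => ?_, Set.subset_union_left⟩
  · exact Set.union_subset_union_right _ (Set.image_mono (hmono hij.le))
  · obtain ⟨x, hxi, hxj⟩ := SetLike.exists_of_lt (hanti hij)
    simp only at heq
    rw [← val_mem_centralizer_union_image_iff hHT] at hxi hxj
    exact hxj (heq ▸ hxi)

theorem HasCentralizerChain.of_subgroup {H : Subgroup G} {n : ℕ} (h : HasCentralizerChain H n) :
    HasCentralizerChain G n := by
  obtain ⟨C, hmono, hanti, -⟩ := h.exists_lift (T := ∅)
    (le_top.trans_eq (centralizer_eq_top_iff_subset.mpr (Set.empty_subset _)).symm)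
  exact ⟨C, hmono, hanti⟩

theorem HasCentralizerChain.succ_of_centralizer {T : Set G} (hT : centralizer T ≠ ⊤) {n : ℕ}
    (h : HasCentralizerChain (centralizer T) n) : HasCentralizerChain G (n + 1) := by
  obtain ⟨C, hmono, hanti, hTC⟩ := h.exists_lift le_rfl
  refine ⟨Matrix.vecCons ∅ C, hmono.vecCons (Set.empty_subset _), ?_⟩
  have hcons : (fun i => centralizer (Matrix.vecCons ∅ C i)) =
      Matrix.vecCons (centralizer ∅) fun i => centralizer (C i) :=
    Fin.comp_cons centralizer ∅ C
  rw [hcons]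
  refine hanti.vecCons ((centralizer_le hTC).trans_lt ?_)
  rwa [centralizer_eq_top_iff_subset.mpr (Set.empty_subset _), lt_top_iff_ne_top]

theorem center_lt_upperCentralSeries_two [Group.IsNilpotent G] (h : center G ≠ ⊤) :
    center G < Subgroup.upperCentralSeries G 2 := by
  rw [← Subgroup.upperCentralSeries_one]
  refine lt_of_le_of_ne (Subgroup.upperCentralSeries_mono G one_le_two) fun heq => h ?_
  rw [← Subgroup.upperCentralSeries_one]
  exact Subgroup.upperCentralSeries.eq_top (by norm_num) heq

/-- Three subgroups lemma, using `⁅Z₂(G), G⁆ ≤ Z(G)`. -/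
theorem commutator_le_centralizer_upperCentralSeries_two :
    commutator G ≤ centralizer (Subgroup.upperCentralSeries G 2) := by
  have hZ : ⁅Subgroup.upperCentralSeries G 2, ⊤⁆ ≤ center G := by
    rw [← Subgroup.upperCentralSeries_one]
    exact Subgroup.commutator_upperCentralSeries_top_le G 1
  rw [_root_.commutator_def, ← commutator_eq_bot_iff_le_centralizer]
  refine commutator_commutator_eq_bot_of_rotate ?_ ?_
  · rw [commutator_comm ⊤]
    exact commutator_top_right_eq_bot_iff_le_center.mpr hZ
  · exact commutator_top_right_eq_bot_iff_le_center.mpr hZ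

theorem derivedSeries_succ_le_map_subtype {H : Subgroup G} (hH : commutator G ≤ H) (n : ℕ) :
    derivedSeries G (n + 1) ≤ (derivedSeries H n).map H.subtype := by
  induction n with
  | zero => simpa [← MonoidHom.range_eq_map] using hH
  | succ n ih => exact commutator_le_map_commutator ih ih

theorem derivedSeries_eq_bot_of_not_hasCentralizerChain [Group.IsNilpotent G] {n : ℕ}
    (hchain : ¬ HasCentralizerChain G n) : derivedSeries G n = ⊥ := by
  induction n generalizing G with
  | zero => exact absurd hasCentralizerChain_zero hchain
  | succ n ih =>
    by_cases hcenter : center G = ⊤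
    · have : commutator G = ⊥ := commutator_top_right_eq_bot_iff_le_center.mpr hcenter.ge
      exact eq_bot_iff.mpr (this ▸ derivedSeries_antitone G (Nat.le_add_left 1 n))
    obtain ⟨z, hz2, hz⟩ := SetLike.exists_of_lt (center_lt_upperCentralSeries_two hcenter)
    have hz_ne : centralizer {z} ≠ ⊤ := by simpa using hz
    have hcomm : commutator G ≤ centralizer {z} :=
      commutator_le_centralizer_upperCentralSeries_two.trans
        (centralizer_le (Set.singleton_subset_iff.mpr hz2))
    have hbot := ih (G := centralizer {z}) fun h => hchain (h.succ_of_centralizer hz_ne)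
    simpa [hbot] using derivedSeries_succ_le_map_subtype hcomm n

theorem commutator_iSup_le_iSup_commutator {ι : Type*} [Nonempty ι] {A : ι → Subgroup G}
    (hA : Directed (· ≤ ·) A) : ⁅⨆ i, A i, ⨆ i, A i⁆ ≤ ⨆ i, ⁅A i, A i⁆ := by
  refine commutator_le.mpr fun a ha b hb => ?_
  obtain ⟨i, hai⟩ := (mem_iSup_of_directed hA).mp ha
  obtain ⟨j, hbj⟩ := (mem_iSup_of_directed hA).mp hb
  obtain ⟨k, hik, hjk⟩ := hA i j
  exact mem_iSup_of_mem k (commutator_mem_commutator (hik hai) (hjk hbj))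

theorem map_subtype_derivedSeries_mono {H K : Subgroup G} (hHK : H ≤ K) (n : ℕ) :
    (derivedSeries H n).map H.subtype ≤ (derivedSeries K n).map K.subtype := by
  rw [← subtype_comp_inclusion hHK, ← map_map]
  exact map_mono (map_derivedSeries_le_derivedSeries _ n)

theorem derivedSeries_le_iSup_map_subtype {ι : Type*} [Nonempty ι] {A : ι → Subgroup G}
    (hA : Directed (· ≤ ·) A) (htop : ⨆ i, A i = ⊤) (n : ℕ) :
    derivedSeries G n ≤ ⨆ i, (derivedSeries (A i) n).map (A i).subtype := by
  induction n with
  | zero => simp [← MonoidHom.range_eq_map, htop]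
  | succ n ih =>
    have hdir : Directed (· ≤ ·) fun i => (derivedSeries (A i) n).map (A i).subtype :=
      hA.mono_comp (g := fun K : Subgroup G => (derivedSeries K n).map K.subtype) _
        fun _ _ h => map_subtype_derivedSeries_mono h n
    simpa only [derivedSeries_succ, map_commutator] using
      (commutator_mono ih ih).trans (commutator_iSup_le_iSup_commutator hdir)

end

/-- If there is a uniform bound `k` on the lengths of strictly descending chains of
centralizers of subsets of `G`, and `G` is locally nilpotent, then `G` is soluble
of derived length at most `k`. -/
theorem stmt_5 {G : Type*} [Group G] (k : ℕ)
    (hk : ¬ ∃ C : Fin (k + 1) → Set G,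
      ∀ i j : Fin (k + 1), i < j → Subgroup.centralizer (C j) < Subgroup.centralizer (C i))
    (hln : ∀ S : Finset G, Group.IsNilpotent (Subgroup.closure (S : Set G))) :
    derivedSeries G k = ⊥ := by
  have hdir : Directed (· ≤ ·) fun S : Finset G => closure (S : Set G) :=
    Monotone.directed_le fun _ _ h => closure_mono (Finset.coe_subset.mpr h)
  have htop : ⨆ S : Finset G, closure (S : Set G) = ⊤ :=
    eq_top_iff.mpr fun x _ => mem_iSup_of_mem {x} (subset_closure (by simp))
  refine eq_bot_iff.mpr <|
    (derivedSeries_le_iSup_map_subtype hdir htop k).trans (iSup_le fun S => ?_)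
  have hS : ¬ HasCentralizerChain (closure (S : Set G)) k := fun h =>
    let ⟨C, _, hC⟩ := h.of_subgroup
    hk ⟨C, fun i j => @hC i j⟩
  have := hln S
  rw [derivedSeries_eq_bot_of_not_hasCentralizerChain hS, Subgroup.map_bot]
end

section
/- Let G be a group, H ≤ G a subgroup, and D a subgroup of an ambient group X ≥ G with H = D ∩ G. Suppose g₁,...,g_l ∈ N_G(H) are such that ⋂_{g ∈ N_G(H)} D^g = D^{g₁} ∩ ... ∩ D^{g_l}. Then N_G(H) = N_G(⋂_{g ∈ N_G(H)} D^g). -/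
/-- conjugate `H^g = g⁻¹ H g` of a subgroup. -/
def conjSubgroup {X : Type*} [Group X] (H : Subgroup X) (g : X) : Subgroup X :=
  Subgroup.map (MulAut.conj g⁻¹).toMonoidHom H

lemma mem_conjSubgroup {X : Type*} [Group X] (H : Subgroup X) (g x : X) :
    x ∈ conjSubgroup H g ↔ g * x * g⁻¹ ∈ H := by
  simp only [conjSubgroup, Subgroup.mem_map]
  constructor
  · rintro ⟨y, hy, rfl⟩
    simpa [mul_assoc] using hy
  · intro h
    exact ⟨g * x * g⁻¹, h, by simp [mul_assoc]⟩

lemma conjSubgroup_one {X : Type*} [Group X] (H : Subgroup X) :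
    conjSubgroup H 1 = H := by
  ext x; simp [mem_conjSubgroup]

lemma conjSubgroup_mul {X : Type*} [Group X] (H : Subgroup X) (a b : X) :
    conjSubgroup H (a * b) = conjSubgroup (conjSubgroup H a) b := by
  ext x; simp [mem_conjSubgroup, mul_assoc]

lemma conjSubgroup_inv_of_eq {X : Type*} [Group X] {H : Subgroup X} {a : X}
    (h : conjSubgroup H a = H) : conjSubgroup H a⁻¹ = H := by
  have : conjSubgroup (conjSubgroup H a) a⁻¹ = conjSubgroup H a⁻¹ := by rw [h]
  rw [← this, ← conjSubgroup_mul, mul_inv_cancel, conjSubgroup_one]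

lemma conjSubgroup_inf {X : Type*} [Group X] (A B : Subgroup X) (g : X) :
    conjSubgroup (A ⊓ B) g = conjSubgroup A g ⊓ conjSubgroup B g := by
  ext x; simp [mem_conjSubgroup]

/-- With `H = D ∩ G` inside an ambient group `X`, `N` the normalizer of `H` in `G`,
and `I = ⋂_{g ∈ N} D^g` (equal to a finite sub-intersection `D^{g₁} ∩ ⋯ ∩ D^{g_l}`),
we have `N_G(H) = N_G(I)`. -/
theorem stmt_7 {X : Type*} [Group X] (G D H : Subgroup X) (hH : H = D ⊓ G)
    (N : Set X) (hN : N = {a : X | a ∈ G ∧ conjSubgroup H a = H})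
    (I : Subgroup X) (hI : I = ⨅ g ∈ N, conjSubgroup D g)
    (l : ℕ) (gs : Fin l → X) (hgs : ∀ i, gs i ∈ N)
    (hfin : I = ⨅ i, conjSubgroup D (gs i)) :
    N = {a : X | a ∈ G ∧ conjSubgroup I a = I} := by
  -- basic facts about N
  have hNG : ∀ a ∈ N, a ∈ G := by intro a ha; rw [hN] at ha; exact ha.1
  have hNH : ∀ a ∈ N, conjSubgroup H a = H := by intro a ha; rw [hN] at ha; exact ha.2
  have hone : (1 : X) ∈ N := by rw [hN]; exact ⟨one_mem G, conjSubgroup_one H⟩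
  have hmul : ∀ a ∈ N, ∀ b ∈ N, a * b ∈ N := by
    intro a ha b hb
    rw [hN]
    exact ⟨mul_mem (hNG a ha) (hNG b hb), by
      rw [conjSubgroup_mul, hNH a ha, hNH b hb]⟩
  have hinv : ∀ a ∈ N, a⁻¹ ∈ N := by
    intro a ha
    rw [hN]
    exact ⟨inv_mem (hNG a ha), conjSubgroup_inv_of_eq (hNH a ha)⟩
  -- membership in I
  have hmemI : ∀ x : X, x ∈ I ↔ ∀ g ∈ N, g * x * g⁻¹ ∈ D := by
    intro x
    rw [hI]
    simp [Subgroup.mem_iInf, mem_conjSubgroup]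
  -- H = I ⊓ G
  have hHle : H ≤ I := by
    intro x hx
    rw [hmemI]
    intro g hg
    have hxg : g * x * g⁻¹ ∈ H := by
      rw [← mem_conjSubgroup, hNH g hg]; exact hx
    rw [hH] at hxg
    exact hxg.1
  have hIleD : I ≤ D := by
    intro x hx
    rw [hmemI] at hx
    have := hx 1 hone
    simpa using this
  have hHIG : H = I ⊓ G := by
    apply le_antisymm
    · exact le_inf hHle (by rw [hH]; exact inf_le_right)
    · rw [hH]; exact inf_le_inf_right G hIleD
  have hconjG : ∀ a ∈ G, conjSubgroup G a = G := by
    intro a ha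
    ext x
    rw [mem_conjSubgroup]
    constructor
    · intro h
      have := mul_mem (mul_mem (inv_mem ha) h) ha
      simpa [mul_assoc] using this
    · intro h
      exact mul_mem (mul_mem ha h) (inv_mem ha)
  ext a
  constructor
  · intro ha
    refine ⟨hNG a ha, ?_⟩
    -- conjSubgroup I a = I
    ext x
    rw [mem_conjSubgroup, hmemI, hmemI]
    constructor
    · intro h g hg
      have := h (g * a⁻¹) (hmul g hg a⁻¹ (hinv a ha))
      simpa [mul_assoc] using this
    · intro h g hg
      have := h (g * a) (hmul g hg a ha)
      simpa [mul_assoc] using this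
  · rintro ⟨haG, haI⟩
    rw [hN]
    refine ⟨haG, ?_⟩
    rw [hHIG, conjSubgroup_inf, haI, hconjG a haG]
end

section
/- Let G be a group satisfying the minimal condition on centralizers. Then the centralizer-connected component G^{cc}, defined as the intersection of all centralizers of finite index in G, equals a finite intersection of such centralizers and has finite index in G. -/
/-!
Under the minimal condition, choose a finite-index centralizer `C_G(A₀)` that is minimal among
finite-index centralizers. For any finite-index centralizer `C_G(A)`, the intersection
`C_G(A) ⊓ C_G(A₀) = C_G(A ∪ A₀)` is again a finite-index centralizer below `C_G(A₀)`, hence equal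
to it by minimality; so `C_G(A₀) ≤ C_G(A)`. Thus `G^cc = C_G(A₀)`, a single centralizer of finite
index.
-/

namespace Subgroup

variable {G : Type*} [Group G]

theorem centralizer_union (S T : Set G) :
    centralizer (S ∪ T) = centralizer S ⊓ centralizer T :=
  SetLike.coe_injective (Set.centralizer_union (S := S) (T := T))

theorem finiteIndex_centralizer_empty : (centralizer (∅ : Set G)).FiniteIndex := by
  rw [centralizer_eq_top_iff_subset.mpr (Set.empty_subset _)]
  infer_instance

theorem wellFounded_centralizer_lt
    (hmc : ¬ ∃ f : ℕ → Set G, StrictAnti fun n => centralizer (f n)) :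
    WellFounded fun A B : Set G => centralizer A < centralizer B :=
  wellFounded_iff_isEmpty_descending_chain.mpr
    ⟨fun ⟨f, hf⟩ => hmc ⟨f, strictAnti_nat_of_succ_lt hf⟩⟩

theorem exists_finiteIndex_centralizer_le_of_finiteIndex
    (hmc : ¬ ∃ f : ℕ → Set G, StrictAnti fun n => centralizer (f n)) :
    ∃ A₀ : Set G, (centralizer A₀).FiniteIndex ∧
      ∀ A : Set G, (centralizer A).FiniteIndex → centralizer A₀ ≤ centralizer A := by
  obtain ⟨A₀, hA₀ : (centralizer A₀).FiniteIndex, hmin⟩ :=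
    (wellFounded_centralizer_lt hmc).has_min {A | (centralizer A).FiniteIndex}
      ⟨∅, finiteIndex_centralizer_empty⟩
  refine ⟨A₀, hA₀, fun A hA => ?_⟩
  have hunion : (centralizer (A ∪ A₀)).FiniteIndex := by
    rw [centralizer_union]
    infer_instance
  have heq : centralizer (A ∪ A₀) = centralizer A₀ := by
    by_contra hne
    refine hmin _ hunion (lt_of_le_of_ne ?_ hne)
    exact centralizer_le Set.subset_union_right
  exact heq ▸ centralizer_le Set.subset_union_left

end Subgroup

/-- In a group with the minimal condition on centralizers, the centralizer-connected
component `G^cc` (the intersection of all finite-index centralizers) is a finite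
intersection of such centralizers and has finite index. -/
theorem stmt_11 {G : Type*} [Group G]
    (hmc : ¬ ∃ f : ℕ → Set G, StrictAnti fun n => Subgroup.centralizer (f n)) :
    ∃ (n : ℕ) (As : Fin n → Set G),
      (∀ i, (Subgroup.centralizer (As i)).FiniteIndex) ∧
      (⨅ (A : Set G) (_ : (Subgroup.centralizer A).FiniteIndex),
          Subgroup.centralizer A) = ⨅ i, Subgroup.centralizer (As i) ∧
      (⨅ (A : Set G) (_ : (Subgroup.centralizer A).FiniteIndex),
          Subgroup.centralizer A).FiniteIndex := by
  obtain ⟨A₀, hA₀, hle⟩ := Subgroup.exists_finiteIndex_centralizer_le_of_finiteIndex hmc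
  have hcc : (⨅ (A : Set G) (_ : (Subgroup.centralizer A).FiniteIndex),
      Subgroup.centralizer A) = Subgroup.centralizer A₀ :=
    le_antisymm (iInf₂_le A₀ hA₀) (le_iInf₂ hle)
  exact ⟨1, fun _ => A₀, fun _ => hA₀, by rw [hcc, iInf_const], hcc ▸ hA₀⟩
end

section
/- Let G be a locally finite group and K a normal subgroup such that G/K is a countable p-group for a prime p. Then there exists a p-subgroup P of G with G = KP. -/
/-!
Enumerate the cosets of `K` as `q 0, q 1, …` and build an increasing chain of finite
`p`-subgroups `P n` with `P (n + 1)` meeting the coset `q n`. To pass from `P n` to `P (n + 1)`,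
take the finite group `H` generated by `P n` and a representative of `q n`, and a Sylow
`p`-subgroup `Q` of `H` containing `P n`: the image of `H` in `G ⧸ K` is a finite `p`-group, so
it is the image of its Sylow subgroup, i.e. of `Q`. The union of the chain is the required `P`.
-/

open Subgroup

section

variable {p : ℕ}

theorem Sylow.coe_eq_top_of_isPGroup {G : Type*} [Group G] (hG : IsPGroup p G) (P : Sylow p G) :
    (P : Subgroup G) = ⊤ :=
  (P.is_maximal' (hG.to_subgroup ⊤) le_top).symm

theorem Sylow.map_eq_range_of_isPGroup {H G : Type*} [Group H] [Group G] [Finite H]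
    [Fact p.Prime] (P : Sylow p H) (f : H →* G) (hf : IsPGroup p f.range) :
    (P : Subgroup H).map f = f.range := by
  have htop := (P.mapSurjective f.rangeRestrict_surjective).coe_eq_top_of_isPGroup hf
  rw [Sylow.coe_mapSurjective] at htop
  rw [← f.subtype_comp_rangeRestrict, ← map_map, htop, ← MonoidHom.range_eq_map, range_subtype,
    f.subtype_comp_rangeRestrict]

theorem IsPGroup.iSup_of_directed {G ι : Type*} [Group G] [Nonempty ι] {H : ι → Subgroup G}
    (hdir : Directed (· ≤ ·) H) (hH : ∀ i, IsPGroup p (H i)) :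
    IsPGroup p (⨆ i, H i : Subgroup G) := by
  rintro ⟨g, hg⟩
  obtain ⟨i, hi⟩ := (mem_iSup_of_directed hdir).mp hg
  obtain ⟨k, hk⟩ := hH i ⟨g, hi⟩
  exact ⟨k, by simpa [Subtype.ext_iff] using hk⟩

variable {G : Type*} [Group G]

theorem exists_finite_isPGroup_ge_meeting_coset
    (hlf : ∀ S : Finset G, Finite (closure (S : Set G))) {K : Subgroup G} [K.Normal]
    [Fact p.Prime] (hpq : IsPGroup p (G ⧸ K)) (P₀ : Subgroup G) (hP₀ : IsPGroup p P₀)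
    (hfin : Finite P₀) (q : G ⧸ K) :
    ∃ Q : Subgroup G, P₀ ≤ Q ∧ IsPGroup p Q ∧ Finite Q ∧ ∃ x ∈ Q, (x : G ⧸ K) = q := by
  set H := closure (insert q.out (P₀ : Set G))
  have hHfin : Finite H := by
    have hS := (Set.toFinite (P₀ : Set G)).insert q.out
    simpa only [H, hS.coe_toFinset] using hlf hS.toFinset
  have hP₀H : P₀ ≤ H := fun x hx ↦ subset_closure (Set.mem_insert_of_mem _ hx)
  have hqH : q.out ∈ H := subset_closure (Set.mem_insert _ _)
  obtain ⟨Q, hQ⟩ := (hP₀.comap_of_injective H.subtype H.subtype_injective).exists_le_sylow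
  let f : H →* G ⧸ K := (QuotientGroup.mk' K).comp H.subtype
  have hfQ : (Q : Subgroup H).map f = f.range := Q.map_eq_range_of_isPGroup f (hpq.to_subgroup _)
  obtain ⟨x, hxQ, hx⟩ : f ⟨q.out, hqH⟩ ∈ (Q : Subgroup H).map f := hfQ ▸ ⟨_, rfl⟩
  refine ⟨(Q : Subgroup H).map H.subtype, fun g hg ↦ ⟨⟨g, hP₀H hg⟩, hQ hg, rfl⟩,
    Q.2.map _, ?_, x, ⟨x, hxQ, rfl⟩, ?_⟩
  · exact Set.Finite.subset (Set.toFinite (H : Set G)) (by rintro _ ⟨y, -, rfl⟩; exact y.2)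
  · simpa [f] using hx

theorem exists_monotone_isPGroup_seq_meeting_cosets
    (hlf : ∀ S : Finset G, Finite (closure (S : Set G))) {K : Subgroup G} [K.Normal]
    [Fact p.Prime] (hpq : IsPGroup p (G ⧸ K)) (q : ℕ → G ⧸ K) :
    ∃ P : ℕ → Subgroup G, Monotone P ∧ (∀ n, IsPGroup p (P n)) ∧
      ∀ n, ∃ x ∈ P (n + 1), (x : G ⧸ K) = q n := by
  choose! next hle hnext hfin hcov using exists_finite_isPGroup_ge_meeting_coset hlf hpq
  let P : ℕ → Subgroup G := fun n ↦
    Nat.rec (motive := fun _ ↦ Subgroup G) ⊥ (fun m Q ↦ next Q (q m)) n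
  have hP : ∀ n, IsPGroup p (P n) ∧ Finite (P n) := by
    intro n
    induction n with
    | zero => exact ⟨IsPGroup.of_bot, inferInstanceAs (Finite (⊥ : Subgroup G))⟩
    | succ n ih => exact ⟨hnext _ ih.1 ih.2 _, hfin _ ih.1 ih.2 _⟩
  exact ⟨P, monotone_nat_of_le_succ fun n ↦ hle _ (hP n).1 (hP n).2 _, fun n ↦ (hP n).1,
    fun n ↦ hcov _ (hP n).1 (hP n).2 _⟩

end

/-- If `G` is locally finite, `K ⊴ G` and `G/K` is a countable `p`-group, then
there is a `p`-subgroup `P` of `G` with `G = KP`. -/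
theorem stmt_13 {G : Type*} [Group G]
    (hlf : ∀ S : Finset G, Finite (Subgroup.closure (S : Set G)))
    (K : Subgroup G) [K.Normal] (p : ℕ) (hp : p.Prime)
    [Countable (G ⧸ K)] (hpq : IsPGroup p (G ⧸ K)) :
    ∃ P : Subgroup G, IsPGroup p P ∧ ∀ g : G, ∃ k ∈ K, ∃ x ∈ P, g = k * x := by
  have : Fact p.Prime := ⟨hp⟩
  obtain ⟨q, hq⟩ := exists_surjective_nat (G ⧸ K)
  obtain ⟨P, hmono, hP, hcov⟩ := exists_monotone_isPGroup_seq_meeting_cosets hlf hpq q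
  refine ⟨⨆ n, P n, IsPGroup.iSup_of_directed hmono.directed_le hP, fun g ↦ ?_⟩
  obtain ⟨n, hn⟩ := hq g
  obtain ⟨x, hx, hxg⟩ := hcov n
  refine ⟨g * x⁻¹, ?_, x, mem_iSup_of_mem (n + 1) hx, by group⟩
  rw [← QuotientGroup.eq_one_iff, QuotientGroup.mk_mul, QuotientGroup.mk_inv, hxg, hn,
    mul_inv_cancel]
end

section
/- A locally soluble, locally finite simple group has prime order. -/
/-!
If `⁅a, b⁆ ≠ 1`, simplicity makes `a` and `b` products of conjugates of `⁅a, b⁆^{±1}`.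
Only finitely many conjugators occur, so inside the finitely generated, hence soluble, subgroup
`K` generated by `a`, `b` and these conjugators, `a` and `b` lie in the normal closure of their
own commutator. Inductively they then lie in every term of the derived series of `K`, so they
are trivial, a contradiction. Thus `G` is abelian, and an abelian simple group has prime order.
-/

open Subgroup
open scoped commutatorElement

section

variable {G : Type*} [Group G]

theorem Subgroup.exists_finset_mem_closure_conj_of_mem_normalClosure {c x : G}
    (hx : x ∈ normalClosure ({c} : Set G)) :
    ∃ T : Finset G, x ∈ closure ((fun g => g * c * g⁻¹) '' (T : Set G)) := by
  classical
  induction hx using closure_induction with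
  | mem x hx =>
    obtain ⟨_, rfl, hconj⟩ := Group.mem_conjugatesOfSet_iff.mp hx
    obtain ⟨g, rfl⟩ := isConj_iff.mp hconj
    exact ⟨{g}, subset_closure (by simp)⟩
  | one => exact ⟨∅, one_mem _⟩
  | mul x y _ _ hx hy =>
    obtain ⟨T, hT⟩ := hx
    obtain ⟨U, hU⟩ := hy
    have hmono {V : Finset G} (hV : V ⊆ T ∪ U) :=
      closure_mono (Set.image_mono (f := fun g => g * c * g⁻¹) (Finset.coe_subset.mpr hV))
    exact ⟨T ∪ U, mul_mem (hmono Finset.subset_union_left hT)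
      (hmono Finset.subset_union_right hU)⟩
  | inv x _ hx =>
    obtain ⟨T, hT⟩ := hx
    exact ⟨T, inv_mem hT⟩

theorem Subgroup.mem_normalClosure_of_mem_closure_conj {H : Subgroup G} {c x : H} {T : Set G}
    (hT : T ⊆ H) (hx : (x : G) ∈ closure ((fun g : G => g * c * g⁻¹) '' T)) :
    x ∈ normalClosure ({c} : Set H) := by
  have hle : closure ((fun g => g * (c : G) * g⁻¹) '' T) ≤
      (normalClosure ({c} : Set H)).map H.subtype := by
    rw [closure_le]
    rintro _ ⟨t, ht, rfl⟩
    exact ⟨⟨t, hT ht⟩ * c * ⟨t, hT ht⟩⁻¹,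
      normalClosure_normal.conj_mem c (subset_normalClosure (Set.mem_singleton c)) _, rfl⟩
  obtain ⟨y, hy, hyx⟩ := hle hx
  rwa [← Subtype.ext hyx]

theorem mem_derivedSeries_of_mem_normalClosure_commutatorElement {a b : G}
    (ha : a ∈ normalClosure ({⁅a, b⁆} : Set G)) (hb : b ∈ normalClosure ({⁅a, b⁆} : Set G))
    (n : ℕ) : a ∈ derivedSeries G n ∧ b ∈ derivedSeries G n := by
  induction n with
  | zero => exact ⟨mem_top a, mem_top b⟩
  | succ n ih =>
    have hle : normalClosure ({⁅a, b⁆} : Set G) ≤ derivedSeries G (n + 1) :=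
      normalClosure_le_normal (N := derivedSeries G (n + 1)) (Set.singleton_subset_iff.mpr
        (commutator_mem_commutator ih.1 ih.2))
    exact ⟨hle ha, hle hb⟩

theorem Group.IsSolvable.eq_one_of_mem_normalClosure_commutatorElement [Group.IsSolvable G]
    {a b : G}
    (ha : a ∈ normalClosure ({⁅a, b⁆} : Set G)) (hb : b ∈ normalClosure ({⁅a, b⁆} : Set G)) :
    a = 1 := by
  obtain ⟨n, hn⟩ := isSolvable_def G |>.mp ‹_›
  simpa [hn] using (mem_derivedSeries_of_mem_normalClosure_commutatorElement ha hb n).1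

theorem IsSimpleGroup.mul_comm_of_isSolvable_closure_finset [IsSimpleGroup G]
    (hls : ∀ S : Finset G, Group.IsSolvable (closure (S : Set G))) (a b : G) : a * b = b * a := by
  classical
  by_contra hab
  have hc : ⁅a, b⁆ ≠ 1 := mt commutatorElement_eq_one_iff_mul_comm.mp hab
  have htop : normalClosure ({⁅a, b⁆} : Set G) = ⊤ :=
    normalClosure_normal.eq_bot_or_eq_top.resolve_left
      fun h => hc (mem_bot.mp (h ▸ subset_normalClosure (Set.mem_singleton _)))
  obtain ⟨Ta, hTa⟩ := exists_finset_mem_closure_conj_of_mem_normalClosure (htop ▸ mem_top a)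
  obtain ⟨Tb, hTb⟩ := exists_finset_mem_closure_conj_of_mem_normalClosure (htop ▸ mem_top b)
  let S : Finset G := {a, b} ∪ Ta ∪ Tb
  have hSK : (S : Set G) ⊆ closure (S : Set G) := subset_closure
  have := hls S
  let a' : closure (S : Set G) := ⟨a, hSK (by simp [S])⟩
  let b' : closure (S : Set G) := ⟨b, hSK (by simp [S])⟩
  have ha' : a' ∈ normalClosure ({⁅a', b'⁆} : Set _) :=
    mem_normalClosure_of_mem_closure_conj (fun g hg => hSK (by simp [S, hg])) hTa
  have hb' : b' ∈ normalClosure ({⁅a', b'⁆} : Set _) :=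
    mem_normalClosure_of_mem_closure_conj (fun g hg => hSK (by simp [S, hg])) hTb
  have ha : a = 1 := congrArg Subtype.val <|
    Group.IsSolvable.eq_one_of_mem_normalClosure_commutatorElement ha' hb'
  exact hc (by simp [ha])

end

theorem stmt_14_general {G : Type*} [Group G] [IsSimpleGroup G]
    (hls : ∀ S : Finset G, IsSolvable (Subgroup.closure (S : Set G))) :
    ∃ p : ℕ, p.Prime ∧ Nat.card G = p := by
  have : IsMulCommutative G :=
    ⟨⟨IsSimpleGroup.mul_comm_of_isSolvable_closure_finset hls⟩⟩
  exact ⟨_, Group.is_simple_iff_prime_card.mp ‹_›, rfl⟩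

/-- A locally soluble, locally finite simple group has prime order. -/
theorem stmt_14 {G : Type*} [Group G] [IsSimpleGroup G]
    (hlf : ∀ S : Finset G, Finite (Subgroup.closure (S : Set G)))
    (hls : ∀ S : Finset G, IsSolvable (Subgroup.closure (S : Set G))) :
    ∃ p : ℕ, p.Prime ∧ Nat.card G = p :=
  stmt_14_general hls
end
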